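/- Let (C_k)_{k≥1} be a sequence of Laurent polynomials with integer coefficients such that there exist positive constants A, B, D with ℓ¹-norm ‖C_k‖₁ ≤ e^{A k + B log k} and support of C_k contained in [−D k², D k²] for all k ≥ 1. Then there exist positive constants A₁, A₂, A₃, A₄, A₅ such that for every complex number α with 0 < Re(α) < 1/6 and all integers n, k with 1 ≤ k < n, one has |K(n,k,α) · C_k(e^{α/n})| ≤ exp((A₁ + A₂ |Re(α)| + A₃ log|α|) · k + A₄ log k + A₅), where K(n,k,α) = ∏_{j=1}^{k} ((e^{α/2} − e^{−α/2})² − (e^{jα/(2n)} − e^{−jα/(2n)})²). -/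

import Mathlib

/-- The evaluation of an integer Laurent polynomial (a finitely supported function `ℤ → ℤ`)
at a complex number `q`: `∑_j a_j q^j`. -/
noncomputable def laurentEval (c : ℤ →₀ ℤ) (q : ℂ) : ℂ :=
  ∑ j ∈ c.support, (c j : ℂ) * q ^ j

/-- The ℓ¹-norm of an integer Laurent polynomial: `∑_j |a_j|`. -/
noncomputable def laurentL1 (c : ℤ →₀ ℤ) : ℝ :=
  ∑ j ∈ c.support, |(c j : ℝ)|

/-- The evaluation of the cyclotomic kernel `C_{n,k}` at `q = e^{α/n}`:
`K(n,k,α) = ∏_{j=1}^{k} ((e^{α/2} − e^{−α/2})² − (e^{jα/(2n)} − e^{−jα/(2n)})²)`. -/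
noncomputable def cycKer (n k : ℕ) (α : ℂ) : ℂ :=
  ∏ j ∈ Finset.Icc 1 k,
    ((Complex.exp (α / 2) - Complex.exp (-α / 2)) ^ 2
      - (Complex.exp ((j : ℂ) * α / (2 * n)) - Complex.exp (-((j : ℂ) * α / (2 * n)))) ^ 2)

/-!
Each factor of the kernel is a difference of squares of `e^z - e^{-z}` with `0 ≤ Re z ≤ 1` and
`|2z| ≤ |α|`; such a quantity is `O(min(1, |α|))`, so every factor is `O(|α|)` and the kernel is
at most `(32 |α|)^k`. Since `|q^j| = e^{j Re α / n}` for `q = e^{α/n}` and `|j| ≤ D k² ≤ D k n` on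
the support of `C_k`, the value `C_k(q)` is at most `‖C_k‖₁ e^{D k Re α}`.
-/

open Complex Finset

lemma norm_exp_sub_exp_neg_le_min {z : ℂ} (hz₀ : 0 ≤ z.re) (hz₁ : z.re ≤ 1) :
    ‖exp z - exp (-z)‖ ≤ 4 * min 1 ‖2 * z‖ := by
  have hneg : ‖exp (-z)‖ ≤ 1 := by
    rw [norm_exp, neg_re, Real.exp_le_one_iff]
    linarith
  rcases le_total ‖2 * z‖ 1 with hsmall | hlarge
  · rw [min_eq_right hsmall]
    have hfactor : exp z - exp (-z) = exp (-z) * (exp (2 * z) - 1) := by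
      rw [mul_sub, ← exp_add, mul_one]
      ring_nf
    calc ‖exp z - exp (-z)‖ = ‖exp (-z)‖ * ‖exp (2 * z) - 1‖ := by rw [hfactor, norm_mul]
      _ ≤ 1 * (2 * ‖2 * z‖) := by gcongr; exact norm_exp_sub_one_le hsmall
      _ ≤ 4 * ‖2 * z‖ := by linarith [norm_nonneg (2 * z)]
  · rw [min_eq_left hlarge]
    have hexp : Real.exp z.re < 3 :=
      (Real.exp_le_exp.mpr hz₁).trans_lt (Real.exp_one_lt_d9.trans (by norm_num))
    calc ‖exp z - exp (-z)‖ ≤ ‖exp z‖ + ‖exp (-z)‖ := norm_sub_le _ _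
      _ ≤ 4 * 1 := by rw [norm_exp]; linarith

lemma norm_kernel_factor_le {α : ℂ} (hα₀ : 0 ≤ α.re) (hα₁ : α.re ≤ 2) {s : ℝ}
    (hs₀ : 0 ≤ s) (hs₁ : s ≤ 1) :
    ‖(exp (α / 2) - exp (-α / 2)) ^ 2 - (exp (s * α / 2) - exp (-(s * α / 2))) ^ 2‖
      ≤ 32 * ‖α‖ := by
  set m := min 1 ‖α‖
  have hm₀ : 0 ≤ m := le_min zero_le_one (norm_nonneg α)
  have hm₁ : m ≤ 1 := min_le_left _ _
  have hmα : m ≤ ‖α‖ := min_le_right _ _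
  have hx : ‖exp (α / 2) - exp (-α / 2)‖ ≤ 4 * m := by
    have h := norm_exp_sub_exp_neg_le_min (z := α / 2) (by simp; linarith) (by simp; linarith)
    rwa [mul_div_cancel₀ _ two_ne_zero, ← neg_div] at h
  have hy : ‖exp (s * α / 2) - exp (-(s * α / 2))‖ ≤ 4 * m := by
    have hre : (s * α / 2 : ℂ).re = s * α.re / 2 := by simp
    refine (norm_exp_sub_exp_neg_le_min (by rw [hre]; positivity) (by rw [hre]; nlinarith)).trans ?_
    rw [mul_div_cancel₀ _ two_ne_zero, norm_mul, norm_real, Real.norm_of_nonneg hs₀]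
    exact mul_le_mul_of_nonneg_left (min_le_min_left 1 (mul_le_of_le_one_left (norm_nonneg α) hs₁))
      (by norm_num)
  calc _ ≤ ‖exp (α / 2) - exp (-α / 2)‖ ^ 2 + ‖exp (s * α / 2) - exp (-(s * α / 2))‖ ^ 2 := by
        rw [← norm_pow, ← norm_pow]
        exact norm_sub_le _ _
    _ ≤ (4 * m) ^ 2 + (4 * m) ^ 2 := by gcongr
    _ ≤ 32 * ‖α‖ := by nlinarith

lemma norm_cycKer_le {α : ℂ} (hα₀ : 0 ≤ α.re) (hα₁ : α.re ≤ 2) {n k : ℕ} (hkn : k ≤ n) :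
    ‖cycKer n k α‖ ≤ (32 * ‖α‖) ^ k := by
  rw [cycKer, norm_prod]
  calc _ ≤ ∏ _j ∈ Icc 1 k, 32 * ‖α‖ := by
        refine prod_le_prod (fun _ _ ↦ norm_nonneg _) fun j hj ↦ ?_
        obtain ⟨hj₁, hjk⟩ := mem_Icc.mp hj
        have hn : (n : ℂ) ≠ 0 := by norm_cast; omega
        have hj : (j : ℂ) * α / (2 * n) = ((j / n : ℝ) : ℂ) * α / 2 := by
          push_cast
          field_simp
        rw [hj]
        exact norm_kernel_factor_le hα₀ hα₁ (by positivity)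
          (div_le_one_of_le₀ (by exact_mod_cast hjk.trans hkn) (Nat.cast_nonneg n))
    _ = (32 * ‖α‖) ^ k := by simp

lemma norm_laurentEval_le (c : ℤ →₀ ℤ) {q : ℂ} {R : ℝ} (h : ∀ j ∈ c.support, ‖q ^ j‖ ≤ R) :
    ‖laurentEval c q‖ ≤ laurentL1 c * R := by
  rw [laurentEval, laurentL1, sum_mul]
  refine (norm_sum_le _ _).trans (sum_le_sum fun j hj ↦ ?_)
  rw [norm_mul, norm_intCast]
  exact mul_le_mul_of_nonneg_left (h j hj) (abs_nonneg _)

lemma norm_exp_div_zpow_le {α : ℂ} (hα : 0 ≤ α.re) {D : ℝ} (hD : 0 ≤ D) {n k : ℕ}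
    (hkn : k ≤ n) {j : ℤ} (hj : |(j : ℝ)| ≤ D * (k : ℝ) ^ 2) :
    ‖exp (α / n) ^ j‖ ≤ Real.exp (D * k * α.re) := by
  rw [← exp_int_mul, norm_exp, Real.exp_le_exp]
  have hre : (j * (α / n) : ℂ).re = j * α.re / n := by simp [mul_div_assoc]
  rw [hre]
  rcases (Nat.cast_nonneg (α := ℝ) n).eq_or_lt with hn | hn
  · rw [← hn, div_zero]
    positivity
  have hkn' : (k : ℝ) ≤ n := by exact_mod_cast hkn
  rw [div_le_iff₀ hn]
  calc j * α.re ≤ |(j : ℝ)| * α.re := by gcongr; exact le_abs_self _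
    _ ≤ D * k ^ 2 * α.re := by gcongr
    _ ≤ D * k * α.re * n := by
        have : 0 ≤ D * k * α.re := by positivity
        nlinarith

/-- If `(C_k)` is a sequence of integer Laurent polynomials with
`‖C_k‖₁ ≤ e^{A k + B log k}` and support contained in `[−D k², D k²]` for all `k ≥ 1`,
then there exist positive constants `A₁,…,A₅` such that for every `α` with `0 < Re α < 1/6`
and all `1 ≤ k < n`,
`|K(n,k,α) · C_k(e^{α/n})| ≤ exp((A₁ + A₂ |Re α| + A₃ log|α|) k + A₄ log k + A₅)`. -/
theorem cyclotomic_summand_estimate (C : ℕ → (ℤ →₀ ℤ)) (A B D : ℝ)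
    (hA : 0 < A) (hB : 0 < B) (hD : 0 < D)
    (hnorm : ∀ k : ℕ, 1 ≤ k → laurentL1 (C k) ≤ Real.exp (A * k + B * Real.log k))
    (hsupp : ∀ k : ℕ, 1 ≤ k → ∀ j ∈ (C k).support, |(j : ℝ)| ≤ D * (k : ℝ) ^ 2) :
    ∃ A₁ A₂ A₃ A₄ A₅ : ℝ, 0 < A₁ ∧ 0 < A₂ ∧ 0 < A₃ ∧ 0 < A₄ ∧ 0 < A₅ ∧
      ∀ α : ℂ, 0 < α.re → α.re < 1 / 6 → ∀ n k : ℕ, 1 ≤ k → k < n →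
        ‖cycKer n k α * laurentEval (C k) (Complex.exp (α / n))‖ ≤
          Real.exp ((A₁ + A₂ * |α.re| + A₃ * Real.log ‖α‖) * k
            + A₄ * Real.log k + A₅) := by
  refine ⟨A + Real.log 32, D, 1, B, 1, by positivity, hD, one_pos, hB, one_pos, ?_⟩
  intro α hα₀ hα₁ n k hk hkn
  have hα : 0 < ‖α‖ := norm_pos_iff.mpr fun h ↦ by simp [h] at hα₀
  have hker := norm_cycKer_le hα₀.le (by linarith) hkn.le
  have heval : ‖laurentEval (C k) (exp (α / n))‖
      ≤ Real.exp (A * k + B * Real.log k) * Real.exp (D * k * α.re) :=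
    (norm_laurentEval_le _ fun j hj ↦
      norm_exp_div_zpow_le hα₀.le hD.le hkn.le (hsupp k hk j hj)).trans
        (mul_le_mul_of_nonneg_right (hnorm k hk) (Real.exp_pos _).le)
  have hpow : (32 * ‖α‖) ^ k = Real.exp ((Real.log 32 + Real.log ‖α‖) * k) := by
    rw [← Real.log_mul (by norm_num) hα.ne', ← Real.rpow_def_of_pos (by positivity),
      Real.rpow_natCast]
  rw [norm_mul, abs_of_pos hα₀]
  calc _ ≤ (32 * ‖α‖) ^ k * (Real.exp (A * k + B * Real.log k) * Real.exp (D * k * α.re)) :=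
        mul_le_mul hker heval (norm_nonneg _) (by positivity)
    _ = Real.exp ((A + Real.log 32 + D * α.re + 1 * Real.log ‖α‖) * k + B * Real.log k) := by
        rw [hpow, ← Real.exp_add, ← Real.exp_add]
        ring_nf
    _ ≤ _ := Real.exp_le_exp.mpr (by linarith)
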